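/- arXiv:1806.06821 — 4 statements merged into one kernel-verified Lean document; each statement's English description precedes it below -/
import Mathlib

section
/- Let n = p^α · q^β · r^γ where p, q, r are distinct primes and α, β, γ ≥ 0. Let 1 ≤ k, l < n with k ≠ l, gcd(n, k, l) = 1, and suppose 3 divides n and 3 divides k + l (condition A). Then gcd(n, k) = 1 or gcd(n, l) = 1 or gcd(n, k − l) = 1. -/
theorem three_prime_factors_coprime (p q r : ℕ) (hp : p.Prime) (hq : q.Prime) (hr : r.Prime)
    (hpq : p ≠ q) (hpr : p ≠ r) (hqr : q ≠ r) (α β γ : ℕ)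
    (n k l : ℤ) (hn : n = (p : ℤ) ^ α * (q : ℤ) ^ β * (r : ℤ) ^ γ)
    (hk1 : 1 ≤ k) (hk2 : k < n) (hl1 : 1 ≤ l) (hl2 : l < n) (hkl : k ≠ l)
    (hgcd : Int.gcd n (Int.gcd k l) = 1)
    (hA : 3 ∣ n ∧ 3 ∣ (k + l)) :
    Int.gcd n k = 1 ∨ Int.gcd n l = 1 ∨ Int.gcd n (k - l) = 1 := by
  obtain ⟨h3n, h3kl⟩ := hA
  -- helper: any prime dividing n is p, q, or r
  have hprime : ∀ a : ℕ, a.Prime → (a : ℤ) ∣ n → a = p ∨ a = q ∨ a = r := by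
    intro a ha hdvd
    rw [hn] at hdvd
    have : a ∣ p ^ α * q ^ β * r ^ γ := by
      have := hdvd
      push_cast at this
      exact_mod_cast this
    rcases (Nat.Prime.dvd_mul ha).mp this with h | h
    · rcases (Nat.Prime.dvd_mul ha).mp h with h' | h'
      · exact Or.inl ((Nat.prime_dvd_prime_iff_eq ha hp).mp (ha.dvd_of_dvd_pow h'))
      · exact Or.inr (Or.inl ((Nat.prime_dvd_prime_iff_eq ha hq).mp (ha.dvd_of_dvd_pow h')))
    · exact Or.inr (Or.inr ((Nat.prime_dvd_prime_iff_eq ha hr).mp (ha.dvd_of_dvd_pow h)))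
  -- 3 does not divide k
  have h3k : ¬ (3 : ℤ) ∣ k := by
    intro h3k
    have h3l : (3 : ℤ) ∣ l := (dvd_add_right h3k).mp h3kl
    have : (3 : ℤ) ∣ (Int.gcd n (Int.gcd k l) : ℤ) :=
      Int.dvd_coe_gcd h3n (Int.dvd_coe_gcd h3k h3l)
    rw [hgcd] at this
    norm_num at this
  by_contra hcon
  push_neg at hcon
  obtain ⟨hnk, hnl, hnkl⟩ := hcon
  obtain ⟨a, ha, hak⟩ := Nat.exists_prime_and_dvd hnk
  obtain ⟨b, hb, hbl⟩ := Nat.exists_prime_and_dvd hnl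
  obtain ⟨c, hc, hckl⟩ := Nat.exists_prime_and_dvd hnkl
  have han : (a : ℤ) ∣ n := dvd_trans (Int.natCast_dvd_natCast.mpr hak) (Int.gcd_dvd_left _ _)
  have hak' : (a : ℤ) ∣ k := dvd_trans (Int.natCast_dvd_natCast.mpr hak) (Int.gcd_dvd_right _ _)
  have hbn : (b : ℤ) ∣ n := dvd_trans (Int.natCast_dvd_natCast.mpr hbl) (Int.gcd_dvd_left _ _)
  have hbl' : (b : ℤ) ∣ l := dvd_trans (Int.natCast_dvd_natCast.mpr hbl) (Int.gcd_dvd_right _ _)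
  have hcn : (c : ℤ) ∣ n := dvd_trans (Int.natCast_dvd_natCast.mpr hckl) (Int.gcd_dvd_left _ _)
  have hckl' : (c : ℤ) ∣ (k - l) := dvd_trans (Int.natCast_dvd_natCast.mpr hckl) (Int.gcd_dvd_right _ _)
  -- distinctness
  have hab : a ≠ b := by
    intro h
    subst h
    have : (a : ℤ) ∣ (Int.gcd n (Int.gcd k l) : ℤ) := Int.dvd_coe_gcd han (Int.dvd_coe_gcd hak' hbl')
    rw [hgcd] at this
    exact ha.one_lt.ne' (by exact_mod_cast Int.eq_one_of_dvd_one (by norm_num) this)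
  have hac : a ≠ c := by
    intro h
    subst h
    have hal : (a : ℤ) ∣ l := by
      have := dvd_sub hak' hckl'
      simpa using this
    have : (a : ℤ) ∣ (Int.gcd n (Int.gcd k l) : ℤ) := Int.dvd_coe_gcd han (Int.dvd_coe_gcd hak' hal)
    rw [hgcd] at this
    exact ha.one_lt.ne' (by exact_mod_cast Int.eq_one_of_dvd_one (by norm_num) this)
  have hbc : b ≠ c := by
    intro h
    subst h
    have hbk : (b : ℤ) ∣ k := by
      have := dvd_add hbl' hckl'
      simpa using this
    have : (b : ℤ) ∣ (Int.gcd n (Int.gcd k l) : ℤ) := Int.dvd_coe_gcd hbn (Int.dvd_coe_gcd hbk hbl')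
    rw [hgcd] at this
    exact hb.one_lt.ne' (by exact_mod_cast Int.eq_one_of_dvd_one (by norm_num) this)
  -- memberships
  have hA3 := hprime 3 (by norm_num) h3n
  have hAa := hprime a ha han
  have hAb := hprime b hb hbn
  have hAc := hprime c hc hcn
  -- hence 3 = a or 3 = b or 3 = c
  have h3abc : 3 = a ∨ 3 = b ∨ 3 = c := by omega
  -- 3 does not divide l either, nor k - l
  have h3l : ¬ (3 : ℤ) ∣ l := by
    intro h3l
    exact h3k ((dvd_add_left h3l).mp h3kl)
  have h3kml : ¬ (3 : ℤ) ∣ (k - l) := by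
    intro h
    apply h3k
    have : (3 : ℤ) ∣ (k + l) + (k - l) := dvd_add h3kl h
    have h2k : (3 : ℤ) ∣ 2 * k := by
      have : (k + l) + (k - l) = 2 * k := by ring
      rwa [this] at ‹(3 : ℤ) ∣ (k + l) + (k - l)›
    omega
  rcases h3abc with h | h | h
  · exact h3k (by subst h; exact_mod_cast hak')
  · exact h3l (by subst h; exact_mod_cast hbl')
  · exact h3kml (by subst h; exact_mod_cast hckl')
end

section
/- Let n ≥ 4 be even and consider the abelian group A with generators x_0, ..., x_{n−1} and relations x_i + x_{i+1} + x_{i+n/2} = 0 for all i (indices mod n). Then A is cyclic of order 2^{n/2} − (−1)^{n/2}. -/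
noncomputable def rels9 (n : ℕ) : Submodule ℤ (ZMod n →₀ ℤ) :=
  Submodule.span ℤ (Set.range fun i : ZMod n =>
    Finsupp.single i (1 : ℤ) + Finsupp.single (i + 1) 1 +
      Finsupp.single (i + (n / 2 : ℕ)) 1)

theorem gamma_n_one_half_ab (n : ℕ) (hn : 4 ≤ n) (he : Even n) :
    IsAddCyclic ((ZMod n →₀ ℤ) ⧸ rels9 n) ∧
      Nat.card ((ZMod n →₀ ℤ) ⧸ rels9 n)
        = ((2 ^ (n / 2) - (-1 : ℤ) ^ (n / 2)).natAbs) := by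
  haveI : NeZero n := ⟨by omega⟩
  haveI : Fact (1 < n) := ⟨by omega⟩
  set m : ℕ := n / 2 with hm
  have hnm : n = 2 * m := by obtain ⟨r, hr⟩ := he; omega
  have hm2 : 2 ≤ m := by omega
  set k : ℤ := 2 ^ m - (-1 : ℤ) ^ m with hk
  have h4le : (4 : ℤ) ≤ 2 ^ m := by
    calc (4 : ℤ) = 2 ^ 2 := by norm_num
    _ ≤ 2 ^ m := pow_le_pow_right₀ (by norm_num) hm2
  have hkpos : 0 < k := by
    rcases Nat.even_or_odd m with h | h
    · rw [hk, h.neg_one_pow]; omega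
    · rw [hk, h.neg_one_pow]; omega
  set kN : ℕ := k.natAbs with hkN
  have hkcast : (kN : ℤ) = k := Int.natAbs_of_nonneg hkpos.le
  haveI : NeZero kN := ⟨by omega⟩
  set w : ZMod n → ZMod kN := fun i => (-2 : ZMod kN) ^ i.val with hw
  have h2m : ((2 : ZMod kN)) ^ m = (-1) ^ m := by
    have h0 : ((k : ℤ) : ZMod kN) = 0 := by
      rw [← hkcast]; exact_mod_cast ZMod.natCast_self kN
    rw [hk] at h0
    push_cast at h0
    linear_combination h0
  have hneg2m : (-2 : ZMod kN) ^ m = 1 := by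
    have : (-2 : ZMod kN) = (-1) * 2 := by ring
    rw [this, mul_pow, h2m, ← mul_pow]; norm_num
  have hneg2n : (-2 : ZMod kN) ^ n = 1 := by
    rw [hnm, pow_mul', hneg2m, one_pow]
  have hper : ∀ a : ℕ, (-2 : ZMod kN) ^ (a % n) = (-2) ^ a := by
    intro a
    conv_rhs => rw [← Nat.div_add_mod a n]
    rw [pow_add, pow_mul, hneg2n, one_pow, one_mul]
  have hmval : ((m : ZMod n)).val = m := ZMod.val_cast_of_lt (by omega)
  set φ : (ZMod n →₀ ℤ) →ₗ[ℤ] ZMod kN := Finsupp.linearCombination ℤ w with hφ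
  have hle : rels9 n ≤ LinearMap.ker φ := by
    rw [rels9, Submodule.span_le]
    rintro _ ⟨i, rfl⟩
    simp only [SetLike.mem_coe, LinearMap.mem_ker, map_add, hφ,
      Finsupp.linearCombination_single, one_smul]
    have e1 : w (i + 1) = (-2 : ZMod kN) ^ (i.val + 1) := by
      rw [hw]; simp only [ZMod.val_add, ZMod.val_one]; exact hper _
    have e2 : w (i + (m : ZMod n)) = (-2 : ZMod kN) ^ (i.val + m) := by
      rw [hw]; simp only [ZMod.val_add, hmval]; exact hper _
    rw [e1, e2, hw]
    simp only
    rw [pow_add, pow_add, hneg2m]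
    ring
  set Q := ((ZMod n →₀ ℤ) ⧸ rels9 n) with hQ
  set φb : Q →ₗ[ℤ] ZMod kN := Submodule.liftQ (rels9 n) φ hle with hφb
  set e : ZMod n → Q := fun i => Submodule.Quotient.mk (Finsupp.single i 1) with hedef
  have h1 : ∀ i : ZMod n, e i + e (i + 1) + e (i + (m : ZMod n)) = 0 := by
    intro i
    have hmem : Finsupp.single i (1:ℤ) + Finsupp.single (i+1) 1 +
        Finsupp.single (i + (m:ZMod n)) 1 ∈ rels9 n := Submodule.subset_span ⟨i, rfl⟩
    rw [hedef]
    simp only [← Submodule.Quotient.mk_add]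
    exact (Submodule.Quotient.mk_eq_zero _).2 hmem
  have hmm : (m : ZMod n) + (m : ZMod n) = 0 := by
    have h : ((m + m : ℕ) : ZMod n) = ((n : ℕ) : ZMod n) := by congr 1; omega
    push_cast at h
    rw [h, ZMod.natCast_self]
  have h2 : ∀ i : ZMod n, e (i + (m : ZMod n)) = e i := by
    intro i
    have ha := h1 (i - 1)
    have hb := h1 (i - 1 + (m : ZMod n))
    rw [show i - 1 + (m : ZMod n) + (m : ZMod n) = i - 1 by
      rw [add_assoc, hmm, add_zero]] at hb
    rw [show i - 1 + 1 = i by ring] at ha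
    rw [show i - 1 + (m : ZMod n) + 1 = i + (m : ZMod n) by ring] at hb
    have h' : e (i-1) + e i + e (i-1+(m:ZMod n)) =
        e (i-1) + e (i + (m:ZMod n)) + e (i-1+(m:ZMod n)) := by
      rw [ha.trans hb.symm]; abel
    exact (add_left_cancel (add_right_cancel h')).symm
  have h3 : ∀ i : ZMod n, e (i + 1) = (-2 : ℤ) • e i := by
    intro i
    have h := h1 i
    rw [h2 i] at h
    have h' : e i + e (i+1) = -(e i) := eq_neg_of_add_eq_zero_left h
    have h'' : e (i+1) = -(e i) - e i := by
      rw [eq_sub_iff_add_eq, add_comm _ (e i)]; exact h'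
    rw [h'']
    have : ((-2 : ℤ)) • e i = -(e i) - e i := by
      rw [show (-2 : ℤ) = -(2:ℤ) by norm_num, neg_smul, two_smul]; abel
    rw [this]
  have h4 : ∀ t : ℕ, e ((t : ZMod n)) = ((-2 : ℤ) ^ t) • e 0 := by
    intro t
    induction t with
    | zero => simp
    | succ t ih =>
      rw [show ((t+1 : ℕ) : ZMod n) = ((t : ℕ) : ZMod n) + 1 by push_cast; ring,
        h3, ih, smul_smul]
      congr 1
      ring
  have h5 : ∀ i : ZMod n, e i = ((-2 : ℤ) ^ i.val) • e 0 := by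
    intro i
    rw [← h4 i.val, ZMod.natCast_rightInverse i]
  have h6 : ((kN : ℤ)) • e 0 = 0 := by
    have he0 : ((-2 : ℤ) ^ m) • e 0 = e 0 := by
      rw [← h4 m]
      have := h2 0
      rwa [zero_add] at this
    have hsub : ((1 : ℤ) - (-2) ^ m) • e 0 = 0 := by
      rw [sub_smul, one_smul, he0, sub_self]
    have hid : (kN : ℤ) = (-(-1 : ℤ) ^ m) * (1 - (-2) ^ m) := by
      rw [hkcast, hk]
      have hp : (-2 : ℤ) ^ m = (-1) ^ m * 2 ^ m := by
        rw [← neg_one_mul, mul_pow]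
      have hsq : ((-1 : ℤ) ^ m) * ((-1) ^ m) = 1 := by
        rw [← pow_add, show m + m = 2 * m by ring, pow_mul]; norm_num
      rw [hp]; linear_combination (-(2:ℤ)^m) * hsq
    rw [hid, mul_smul, hsub, smul_zero]
  set ψ : ZMod kN →+ Q := ZMod.lift kN ⟨zmultiplesHom Q (e 0), by
    simpa [zmultiplesHom_apply] using h6⟩ with hψ
  have hψcoe : ∀ a : ℤ, ψ ((a : ℤ) : ZMod kN) = a • e 0 := by
    intro a
    rw [hψ, ZMod.lift_coe]
    simp [zmultiplesHom_apply]
  have hφbe : ∀ i : ZMod n, φb (e i) = (-2 : ZMod kN) ^ i.val := by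
    intro i
    rw [hedef, hφb]
    exact (Submodule.liftQ_apply _ _ _).trans (by
      rw [hφ, Finsupp.linearCombination_single, one_smul, hw])
  have eq2 : ∀ z : ZMod kN, φb (ψ z) = z := by
    intro z
    rw [show z = ((z.val : ℤ) : ZMod kN) by
      push_cast; exact (ZMod.natCast_rightInverse z).symm]
    rw [hψcoe, map_zsmul, hφbe 0]
    simp
  have eq1 : ∀ q : Q, ψ (φb q) = q := by
    intro q
    obtain ⟨x, rfl⟩ := Submodule.Quotient.mk_surjective (rels9 n) q
    induction x using Finsupp.induction_linear with
    | zero => simp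
    | add f g hf hg =>
      rw [Submodule.Quotient.mk_add, map_add, map_add, hf, hg]
    | single i c =>
      have hS : Finsupp.single i c = c • Finsupp.single i (1:ℤ) := by
        rw [Finsupp.smul_single, smul_eq_mul, mul_one]
      have hmk : (Submodule.Quotient.mk (Finsupp.single i c) : Q) = c • e i := by
        rw [hedef, hS, Submodule.Quotient.mk_smul]
      rw [hmk, map_zsmul, hφbe i]
      have hcc : (c : ℤ) • ((-2 : ZMod kN) ^ i.val)
          = ((c * (-2) ^ i.val : ℤ) : ZMod kN) := by
        rw [zsmul_eq_mul]; push_cast; ring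
      rw [hcc, hψcoe, mul_smul, ← h5 i]
  -- assemble the equivalence
  have E : Q ≃+ ZMod kN :=
    { toFun := φb, invFun := ψ, left_inv := eq1, right_inv := eq2,
      map_add' := map_add φb }
  constructor
  · exact isAddCyclic_of_surjective E.symm.toAddMonoidHom E.symm.surjective
  · rw [Nat.card_congr E.toEquiv, Nat.card_zmod]
end

section
/- Let m ≥ 2 and consider the abelian group A with generators x_0, ..., x_{m−1} and relations 2x_i + x_{i+1} = 0 for all 0 ≤ i < m (indices mod m). Then A is cyclic of order 2^m − (−1)^m. -/
noncomputable def rels10 (m : ℕ) : Submodule ℤ (ZMod m →₀ ℤ) :=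
  Submodule.span ℤ (Set.range fun i : ZMod m =>
    Finsupp.single i (2 : ℤ) + Finsupp.single (i + 1) 1)

lemma rels10_memA (m k : ℕ) :
    Finsupp.single ((k : ZMod m)) (1 : ℤ) - (-2 : ℤ) ^ k • Finsupp.single 0 1 ∈ rels10 m := by
  induction k with
  | zero => simp
  | succ k ih =>
    have hgen : Finsupp.single ((k : ZMod m)) (2 : ℤ)
        + Finsupp.single ((k : ZMod m) + 1) 1 ∈ rels10 m :=
      Submodule.subset_span ⟨(k : ZMod m), rfl⟩
    have hmem := Submodule.add_mem _ hgen (Submodule.smul_mem _ (-2 : ℤ) ih)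
    convert hmem using 1
    have h2 : Finsupp.single ((k : ZMod m)) (2 : ℤ)
        = (2 : ℤ) • Finsupp.single ((k : ZMod m)) (1 : ℤ) := by
      simp
    rw [h2]
    push_cast
    rw [pow_succ]
    module

theorem circulant_two_one_cyclic (m : ℕ) (hm : 2 ≤ m) :
    IsAddCyclic ((ZMod m →₀ ℤ) ⧸ rels10 m) ∧
      Nat.card ((ZMod m →₀ ℤ) ⧸ rels10 m)
        = ((2 ^ m - (-1 : ℤ) ^ m).natAbs) := by
  haveI : NeZero m := ⟨by omega⟩
  set N : ℤ := 2 ^ m - (-1 : ℤ) ^ m with hNdef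
  set n : ℕ := N.natAbs with hndef
  have hNpos : 0 < N := by
    have h1 : (1 : ℤ) < 2 ^ m := by
      calc (1:ℤ) < 2 ^ 2 := by norm_num
      _ ≤ 2 ^ m := pow_le_pow_right₀ (by norm_num) hm
    have h2 : (-1 : ℤ) ^ m ≤ 1 := by
      rcases Nat.even_or_odd m with h | h
      · rw [h.neg_one_pow]
      · rw [h.neg_one_pow]; norm_num
    omega
  have hnN : (n : ℤ) = N := Int.natAbs_of_nonneg hNpos.le
  have hNzero : ((N : ℤ) : ZMod n) = 0 := by
    rw [← hnN]; exact_mod_cast ZMod.natCast_self n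
  -- (-2)^m = 1 in ZMod n
  have hsq : ((-1 : ℤ)) ^ m * (-1) ^ m = 1 := by
    rw [← pow_add]
    exact Even.neg_one_pow ⟨m, rfl⟩
  have hkey : ((-2 : ℤ)) ^ m - 1 = (-1) ^ m * N := by
    rw [hNdef, neg_pow, mul_sub, hsq]
  have hone : (-2 : ZMod n) ^ m = 1 := by
    have : (((-2 : ℤ) ^ m - 1 : ℤ) : ZMod n) = 0 := by
      rw [hkey]; push_cast [hNzero]; ring
    push_cast at this
    linear_combination this
  have hpow : ∀ a : ℕ, (-2 : ZMod n) ^ (a % m) = (-2 : ZMod n) ^ a := by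
    intro a
    conv_rhs => rw [← Nat.div_add_mod a m]
    rw [pow_add, pow_mul, hone, one_pow, one_mul]
  -- the linear map to ZMod n
  set f : (ZMod m →₀ ℤ) →ₗ[ℤ] ZMod n :=
    Finsupp.linearCombination ℤ (fun i : ZMod m => (-2 : ZMod n) ^ i.val) with hfdef
  have hf_single : ∀ (i : ZMod m) (c : ℤ),
      f (Finsupp.single i c) = c • (-2 : ZMod n) ^ i.val := by
    intro i c
    simp [hfdef, Finsupp.linearCombination_single]
  have hker : rels10 m ≤ LinearMap.ker f := by
    rw [rels10, Submodule.span_le]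
    rintro _ ⟨i, rfl⟩
    simp only [SetLike.mem_coe, LinearMap.mem_ker, map_add, hf_single]
    haveI : Fact (1 < m) := ⟨by omega⟩
    have hval : (i + 1).val = (i.val + 1) % m := by
      rw [ZMod.val_add, ZMod.val_one]
    rw [hval, hpow, pow_succ]
    push_cast [zsmul_eq_mul]
    ring
  set fbar : ((ZMod m →₀ ℤ) ⧸ rels10 m) →ₗ[ℤ] ZMod n :=
    Submodule.liftQ (rels10 m) f hker with hfbar
  -- membership lemma specialized
  have memA : ∀ i : ZMod m,
      Finsupp.single i (1 : ℤ) - (-2 : ℤ) ^ i.val • Finsupp.single 0 1 ∈ rels10 m := by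
    intro i
    have := rels10_memA m i.val
    rwa [ZMod.natCast_rightInverse i] at this
  -- N • x0 ∈ rels
  have hNx0 : N • Finsupp.single (0 : ZMod m) (1 : ℤ) ∈ rels10 m := by
    have h := rels10_memA m m
    rw [ZMod.natCast_self] at h
    have h' := Submodule.smul_mem (rels10 m) (-((-1 : ℤ) ^ m)) h
    convert h' using 1
    have hs : N = (-((-1:ℤ) ^ m)) * 1 - (-((-1:ℤ) ^ m)) * ((-2:ℤ) ^ m) := by
      linear_combination (-((-1:ℤ) ^ m)) * hkey + (-N) * hsq
    rw [hs]
    module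
  -- claim: every x is congruent to c • x0 mod rels with (c : ZMod n) = f x
  have claim : ∀ x : ZMod m →₀ ℤ, ∃ c : ℤ,
      x - c • Finsupp.single 0 1 ∈ rels10 m ∧ ((c : ℤ) : ZMod n) = f x := by
    intro x
    induction x using Finsupp.induction_linear with
    | zero => exact ⟨0, by simp, by simp⟩
    | add x y hx hy =>
      obtain ⟨c1, hc1, hc1'⟩ := hx
      obtain ⟨c2, hc2, hc2'⟩ := hy
      refine ⟨c1 + c2, ?_, by push_cast [map_add, hc1', hc2']; ring⟩
      have := Submodule.add_mem _ hc1 hc2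
      convert this using 1
      rw [add_smul]
      abel
    | single i b =>
      refine ⟨b * (-2) ^ i.val, ?_, ?_⟩
      · have := Submodule.smul_mem (rels10 m) b (memA i)
        convert this using 1
        rw [smul_sub, Finsupp.smul_single, smul_smul]
        simp [mul_comm]
      · rw [hf_single]
        push_cast [zsmul_eq_mul]
        ring
  have surj : Function.Surjective fbar := by
    intro z
    obtain ⟨k, rfl⟩ := ZMod.intCast_surjective z
    refine ⟨Submodule.Quotient.mk (Finsupp.single 0 k), ?_⟩
    rw [hfbar, Submodule.liftQ_apply, hf_single]
    simp [zsmul_eq_mul]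
  have inj : Function.Injective fbar := by
    rw [injective_iff_map_eq_zero]
    intro q hq
    obtain ⟨x, rfl⟩ := Submodule.Quotient.mk_surjective _ q
    rw [hfbar, Submodule.liftQ_apply] at hq
    obtain ⟨c, hc, hc'⟩ := claim x
    rw [hq] at hc'
    have hdvd : (n : ℤ) ∣ c := (ZMod.intCast_zmod_eq_zero_iff_dvd c n).mp hc'
    obtain ⟨d, rfl⟩ := hdvd
    rw [Submodule.Quotient.mk_eq_zero]
    have hcx0 : ((n : ℤ) * d) • Finsupp.single (0 : ZMod m) (1 : ℤ) ∈ rels10 m := by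
      have := Submodule.smul_mem (rels10 m) d hNx0
      rw [smul_smul, ← hnN] at this
      rwa [mul_comm]
    have := Submodule.add_mem _ hc hcx0
    convert this using 1
    abel
  have e : ((ZMod m →₀ ℤ) ⧸ rels10 m) ≃ₗ[ℤ] ZMod n :=
    LinearEquiv.ofBijective fbar ⟨inj, surj⟩
  constructor
  · exact isAddCyclic_of_surjective e.symm.toAddEquiv.toAddMonoidHom e.symm.surjective
  · rw [Nat.card_congr e.toEquiv, Nat.card_zmod]
end

section
/- Let n ≥ 3, 1 ≤ k, l < n with k ≠ l and gcd(n,k,l) = 1, and write f(t) = 1 + t^k + t^l. If 3 | n and 3 | (k + l), then the degree of gcd(f(t), t^n − 1) over ℚ equals 2, and in fact gcd(f(t), t^n − 1) = t^2 + t + 1. -/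
open Polynomial

private lemma aux_P_dvd (m : ℕ) : (X^2 + X + 1 : ℚ[X]) ∣ X^(3*m) - 1 := by
  have h1 : (X^2 + X + 1 : ℚ[X]) ∣ X^3 - 1 := ⟨X - 1, by ring⟩
  have h2 : (X^3 - 1 : ℚ[X]) ∣ X^(3*m) - 1 := by
    have := sub_dvd_pow_sub_pow (X^3 : ℚ[X]) 1 m
    rwa [one_pow, ← pow_mul] at this
  exact h1.trans h2

theorem gcd_exponent_polynomial (n k l : ℕ) (hn : 3 ≤ n)
    (hk1 : 1 ≤ k) (hk2 : k < n) (hl1 : 1 ≤ l) (hl2 : l < n) (hkl : k ≠ l)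
    (hgcd : Nat.gcd n (Nat.gcd k l) = 1) (h3n : 3 ∣ n) (h3kl : 3 ∣ (k + l)) :
    (gcd ((1 : Polynomial ℚ) + X ^ k + X ^ l) (X ^ n - 1)).natDegree = 2 ∧
      gcd ((1 : Polynomial ℚ) + X ^ k + X ^ l) (X ^ n - 1) = X ^ 2 + X + 1 := by
  have hP2 : (X^2 + X + 1 : ℚ[X]).natDegree = 2 := by compute_degree!
  have hPm : (X^2 + X + 1 : ℚ[X]).Monic := by monicity!
  -- 3 does not divide k or l
  have h3k : ¬ (3 ∣ k) := by
    intro h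
    have hl' : 3 ∣ l := (Nat.dvd_add_right h).mp h3kl
    have : 3 ∣ Nat.gcd n (Nat.gcd k l) := Nat.dvd_gcd h3n (Nat.dvd_gcd h hl')
    omega
  have h3l : ¬ (3 ∣ l) := by
    intro h
    have hk' : 3 ∣ k := (Nat.dvd_add_left h).mp h3kl
    have : 3 ∣ Nat.gcd n (Nat.gcd k l) := Nat.dvd_gcd h3n (Nat.dvd_gcd hk' h)
    omega
  -- P divides f
  have hPf : (X^2 + X + 1 : ℚ[X]) ∣ (1 : ℚ[X]) + X ^ k + X ^ l := by
    have hmod : (k % 3 = 1 ∧ l % 3 = 2) ∨ (k % 3 = 2 ∧ l % 3 = 1) := by omega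
    rcases hmod with ⟨hk3, hl3⟩ | ⟨hk3, hl3⟩
    · obtain ⟨a, ha⟩ : ∃ a, k = 3*a+1 := ⟨k/3, by omega⟩
      obtain ⟨b, hb⟩ : ∃ b, l = 3*b+2 := ⟨l/3, by omega⟩
      subst ha; subst hb
      have key : (1 : ℚ[X]) + X^(3*a+1) + X^(3*b+2)
          = X * (X^(3*a) - 1) + X^2 * (X^(3*b) - 1) + (X^2 + X + 1) := by ring
      rw [key]
      exact dvd_add (dvd_add ((aux_P_dvd a).mul_left X) ((aux_P_dvd b).mul_left (X^2))) dvd_rfl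
    · obtain ⟨a, ha⟩ : ∃ a, k = 3*a+2 := ⟨k/3, by omega⟩
      obtain ⟨b, hb⟩ : ∃ b, l = 3*b+1 := ⟨l/3, by omega⟩
      subst ha; subst hb
      have key : (1 : ℚ[X]) + X^(3*a+2) + X^(3*b+1)
          = X^2 * (X^(3*a) - 1) + X * (X^(3*b) - 1) + (X^2 + X + 1) := by ring
      rw [key]
      exact dvd_add (dvd_add ((aux_P_dvd a).mul_left (X^2)) ((aux_P_dvd b).mul_left X)) dvd_rfl
  -- P divides X^n - 1
  have hPn : (X^2 + X + 1 : ℚ[X]) ∣ X ^ n - 1 := by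
    obtain ⟨m, hm⟩ := h3n
    subst hm
    exact aux_P_dvd m
  set f : ℚ[X] := (1 : ℚ[X]) + X ^ k + X ^ l with hfdef
  have hXn : (X ^ n - 1 : ℚ[X]) ≠ 0 := by
    have := Polynomial.X_pow_sub_C_ne_zero (R := ℚ) (by omega : 0 < n) 1
    simpa using this
  have hg0 : gcd f (X ^ n - 1) ≠ 0 := by
    intro h
    exact hXn ((gcd_eq_zero_iff _ _).mp h).2
  have hgm : (gcd f (X ^ n - 1)).Monic := by
    have := Polynomial.monic_normalize hg0
    rwa [normalize_gcd] at this
  have hPg : (X^2 + X + 1 : ℚ[X]) ∣ gcd f (X ^ n - 1) := dvd_gcd hPf hPn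
  -- degree bound via complex roots
  set φ : ℂ[X] := map (algebraMap ℚ ℂ) (gcd f (X ^ n - 1)) with hφdef
  have hφ0 : φ ≠ 0 := Polynomial.map_ne_zero hg0
  have hcard : (gcd f (X ^ n - 1)).natDegree = Multiset.card φ.roots :=
    (natDegree_map (algebraMap ℚ ℂ)).symm.trans IsAlgClosed.card_roots_eq_natDegree.symm
  have hφn : φ ∣ (X ^ n - C 1 : ℂ[X]) := by
    have := Polynomial.map_dvd (algebraMap ℚ ℂ) (gcd_dvd_right f (X ^ n - 1))
    simpa using this
  have hsep : (X ^ n - C 1 : ℂ[X]).Separable :=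
    Polynomial.separable_X_pow_sub_C 1 (Nat.cast_ne_zero.mpr (by omega)) one_ne_zero
  have hnodup : φ.roots.Nodup := nodup_roots (hsep.of_dvd hφn)
  have hPCne : (X^2 + X + 1 : ℂ[X]) ≠ 0 := by
    have : (X^2 + X + 1 : ℂ[X]).Monic := by monicity!
    exact this.ne_zero
  have hsub : ∀ ζ ∈ φ.roots, ζ ∈ (X^2 + X + 1 : ℂ[X]).roots := by
    intro ζ hζ
    have hev : eval ζ φ = 0 := (mem_roots hφ0).mp hζ
    -- ζ is a root of (image of) f
    have h1 : (1 : ℂ) + ζ ^ k + ζ ^ l = 0 := by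
      obtain ⟨q, hq⟩ := gcd_dvd_left f (X ^ n - 1)
      have : eval ζ (map (algebraMap ℚ ℂ) f) = 0 := by
        rw [hq, Polynomial.map_mul, eval_mul, ← hφdef, hev, zero_mul]
      simpa [hfdef] using this
    -- ζ is a root of X^n - 1
    have h2 : ζ ^ n = 1 := by
      obtain ⟨q, hq⟩ := gcd_dvd_right f (X ^ n - 1)
      have : eval ζ (map (algebraMap ℚ ℂ) (X ^ n - 1)) = 0 := by
        rw [hq, Polynomial.map_mul, eval_mul, ← hφdef, hev, zero_mul]
      have h' : ζ ^ n - 1 = 0 := by simpa using this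
      exact sub_eq_zero.mp h'
    have hζ0 : ζ ≠ 0 := by
      intro h
      rw [h, zero_pow (by omega : k ≠ 0), zero_pow (by omega : l ≠ 0)] at h1
      norm_num at h1
    have habs : ‖ζ‖ = 1 := Complex.norm_eq_one_of_pow_eq_one h2 (by omega)
    have hconj : ζ⁻¹ = (starRingEnd ℂ) ζ := Complex.inv_eq_conj habs
    have h1' : (1 : ℂ) + (ζ⁻¹) ^ k + (ζ⁻¹) ^ l = 0 := by
      have := congrArg (starRingEnd ℂ) h1
      simpa [map_add, map_pow, map_one, ← hconj] using this
    have e1 : ζ ^ (k + l) + ζ ^ l + ζ ^ k = 0 := by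
      have hkk := pow_ne_zero k hζ0
      have hll := pow_ne_zero l hζ0
      rw [inv_pow, inv_pow] at h1'
      field_simp at h1'
      linear_combination h1'
    have hkl1 : ζ ^ (k + l) = 1 := by linear_combination e1 - h1
    have e2 : ζ ^ (2 * k) + ζ ^ k + 1 = 0 := by
      linear_combination (ζ ^ k) * h1 - hkl1
    have e3 : ζ ^ (2 * l) + ζ ^ l + 1 = 0 := by
      linear_combination (ζ ^ l) * h1 - hkl1
    have h3k1 : ζ ^ (3 * k) = 1 := by linear_combination (ζ ^ k - 1) * e2
    have h3l1 : ζ ^ (3 * l) = 1 := by linear_combination (ζ ^ l - 1) * e3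
    have hstep := pow_gcd_eq_one.mpr ⟨h3l1, h2⟩
    have hfin := pow_gcd_eq_one.mpr ⟨h3k1, hstep⟩
    have hdn : (Nat.gcd k l).Coprime n := Nat.coprime_comm.mp hgcd
    have hgcd3 : (3 * k).gcd ((3 * l).gcd n) = 3 := by
      rw [← Nat.gcd_assoc, Nat.gcd_mul_left, mul_comm,
        Nat.Coprime.gcd_mul_left_cancel 3 hdn]
      exact Nat.gcd_eq_left h3n
    rw [hgcd3] at hfin
    have hζ1 : ζ ≠ 1 := by
      intro h
      rw [h] at h1
      norm_num at h1
    have hroot : ζ ^ 2 + ζ + 1 = 0 := by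
      have hm : (ζ - 1) * (ζ ^ 2 + ζ + 1) = 0 := by linear_combination hfin
      rcases mul_eq_zero.mp hm with h | h
      · exact absurd (sub_eq_zero.mp h) hζ1
      · exact h
    rw [mem_roots hPCne]
    simpa [IsRoot] using hroot
  have hcardP : Multiset.card (X^2 + X + 1 : ℂ[X]).roots ≤ 2 := by
    have := Polynomial.card_roots' (X^2 + X + 1 : ℂ[X])
    have h2 : (X^2 + X + 1 : ℂ[X]).natDegree = 2 := by compute_degree!
    omega
  have hle : φ.roots ≤ (X^2 + X + 1 : ℂ[X]).roots := by
    rw [Multiset.le_iff_count]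
    intro a
    by_cases ha : a ∈ φ.roots
    · have c1 := Multiset.nodup_iff_count_le_one.mp hnodup a
      have c2 := Multiset.one_le_count_iff_mem.mpr (hsub a ha)
      omega
    · simp [Multiset.count_eq_zero.mpr ha]
  have hdeg : (gcd f (X ^ n - 1)).natDegree ≤ 2 := by
    rw [hcard]
    exact le_trans (Multiset.card_le_card hle) hcardP
  -- conclude equality
  obtain ⟨q, hq⟩ := hPg
  have hq0 : q ≠ 0 := by
    intro h
    rw [h, mul_zero] at hq
    exact hg0 hq
  have hqd : q.natDegree = 0 := by
    have := Polynomial.natDegree_mul hPm.ne_zero hq0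
    rw [← hq, hP2] at this
    omega
  have hqc : q = C (q.coeff 0) := Polynomial.eq_C_of_natDegree_eq_zero hqd
  have hlc : q.coeff 0 = 1 := by
    have := hgm
    rw [hq, hqc, Monic, Polynomial.leadingCoeff_mul, Polynomial.leadingCoeff_C,
      hPm.leadingCoeff, one_mul] at this
    exact this
  have hgeq : gcd f (X ^ n - 1) = X^2 + X + 1 := by
    rw [hq, hqc, hlc, map_one, mul_one]
  exact ⟨hgeq ▸ hP2, hgeq⟩
end
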